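/- arXiv:1309.6248 — 3 statements merged into one kernel-verified Lean document; each statement's English description precedes it below -/
import Mathlib

section
/- Let n ≥ 3 and m < 0. If the function φ(ρ) = ρ² − 1 − 2m·ρ^{2−n} has a positive root ρ₀ > 0, then m ≥ −(n−2)^{(n−2)/2} / n^{n/2}. -/
/-- For `0 < x ≤ 1` and `a > 0`, `x ^ a * (1 - x) ≤ a ^ a / (a + 1) ^ (a + 1)`. -/
lemma key_ineq (a x : ℝ) (ha : 0 < a) (hx0 : 0 < x) (hx1 : x ≤ 1) :
    x ^ a * (1 - x) ≤ a ^ a / (a + 1) ^ (a + 1) := by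
  have ha1 : (0:ℝ) < a + 1 := by linarith
  set w₁ : ℝ := a / (a + 1) with hw₁def
  set w₂ : ℝ := 1 / (a + 1) with hw₂def
  have hw₁ : 0 < w₁ := div_pos ha ha1
  have hw₂ : 0 < w₂ := div_pos one_pos ha1
  have hwsum : w₁ + w₂ = 1 := by rw [hw₁def, hw₂def]; field_simp
  have h1x : 0 ≤ 1 - x := by linarith
  have h := Real.geom_mean_le_arith_mean2_weighted hw₁.le hw₂.le
    (div_nonneg hx0.le hw₁.le) (div_nonneg h1x hw₂.le) hwsum
  have hrhs : w₁ * (x / w₁) + w₂ * ((1 - x) / w₂) = 1 := by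
    rw [mul_div_cancel₀ _ hw₁.ne', mul_div_cancel₀ _ hw₂.ne']; ring
  rw [hrhs] at h
  rw [Real.div_rpow hx0.le hw₁.le, Real.div_rpow h1x hw₂.le] at h
  have hpos : 0 < w₁ ^ w₁ * w₂ ^ w₂ :=
    mul_pos (Real.rpow_pos_of_pos hw₁ _) (Real.rpow_pos_of_pos hw₂ _)
  have h2 : x ^ w₁ * (1 - x) ^ w₂ ≤ w₁ ^ w₁ * w₂ ^ w₂ := by
    have := mul_le_mul_of_nonneg_left h hpos.le
    calc x ^ w₁ * (1 - x) ^ w₂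
        = w₁ ^ w₁ * w₂ ^ w₂ * (x ^ w₁ / w₁ ^ w₁ * ((1 - x) ^ w₂ / w₂ ^ w₂)) := by
          field_simp
      _ ≤ w₁ ^ w₁ * w₂ ^ w₂ * 1 := this
      _ = w₁ ^ w₁ * w₂ ^ w₂ := by ring
  have h3 := Real.rpow_le_rpow (by positivity) h2 ha1.le
  have hL : (x ^ w₁ * (1 - x) ^ w₂) ^ (a + 1) = x ^ a * (1 - x) := by
    rw [Real.mul_rpow (by positivity) (by positivity),
      ← Real.rpow_mul hx0.le, ← Real.rpow_mul h1x]
    have e1 : w₁ * (a + 1) = a := by rw [hw₁def]; field_simp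
    have e2 : w₂ * (a + 1) = 1 := by rw [hw₂def]; field_simp
    rw [e1, e2, Real.rpow_one]
  have hR : (w₁ ^ w₁ * w₂ ^ w₂) ^ (a + 1) = a ^ a / (a + 1) ^ (a + 1) := by
    rw [Real.mul_rpow (by positivity) (by positivity),
      ← Real.rpow_mul hw₁.le, ← Real.rpow_mul hw₂.le]
    have e1 : w₁ * (a + 1) = a := by rw [hw₁def]; field_simp
    have e2 : w₂ * (a + 1) = 1 := by rw [hw₂def]; field_simp
    rw [e1, e2, Real.rpow_one, hw₁def, hw₂def,
      Real.div_rpow ha.le ha1.le, Real.rpow_add_one ha1.ne']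
    have hpa : (0:ℝ) < (a + 1) ^ a := Real.rpow_pos_of_pos ha1 _
    field_simp
  rw [hL, hR] at h3
  exact h3

/-- If `φ(ρ) = ρ² − 1 − 2m ρ^{2−n}` has a positive root for some `m < 0`, then
`m ≥ −(n−2)^{(n−2)/2} / n^{n/2}`. -/
theorem stmt_0 (n : ℕ) (hn : 3 ≤ n) (m : ℝ) (hm : m < 0)
    (hroot : ∃ ρ₀ : ℝ, 0 < ρ₀ ∧ ρ₀ ^ 2 - 1 - 2 * m / ρ₀ ^ (n - 2) = 0) :
    m ≥ -((n : ℝ) - 2) ^ (((n : ℝ) - 2) / 2) / (n : ℝ) ^ ((n : ℝ) / 2) := by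
  obtain ⟨ρ, hρ, heq⟩ := hroot
  have hρn : (0:ℝ) < ρ ^ (n - 2) := pow_pos hρ _
  have hkey : 2 * m = ρ ^ (n - 2) * (ρ ^ 2 - 1) := by
    field_simp at heq
    linarith [heq]
  set a : ℝ := ((n:ℝ) - 2) / 2 with hadef
  have hn2 : (2:ℝ) ≤ (n:ℝ) := by
    have : (3:ℝ) ≤ (n:ℝ) := by exact_mod_cast hn
    linarith
  have hn3 : (3:ℝ) ≤ (n:ℝ) := by exact_mod_cast hn
  have ha : 0 < a := by rw [hadef]; linarith
  have hcast : ((n - 2 : ℕ) : ℝ) = (n:ℝ) - 2 := by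
    have : 2 ≤ n := by omega
    push_cast [this]; ring
  -- x = ρ²
  have hx0 : (0:ℝ) < ρ ^ 2 := by positivity
  have hx1 : ρ ^ 2 ≤ 1 := by
    by_contra h
    push_neg at h
    nlinarith
  -- ρ^(n-2) = (ρ²)^a
  have hpow : ρ ^ (n - 2) = (ρ ^ 2) ^ a := by
    rw [← Real.rpow_natCast ρ (n - 2), hcast,
      ← Real.rpow_natCast ρ 2, ← Real.rpow_mul hρ.le]
    push_cast
    congr 1
    rw [hadef]; ring
  have hkey2 : -(2 * m) = (ρ ^ 2) ^ a * (1 - ρ ^ 2) := by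
    rw [hkey, hpow]; ring
  have h := key_ineq a (ρ ^ 2) ha hx0 hx1
  rw [← hkey2] at h
  -- Now simplify a^a / (a+1)^(a+1)
  have ha1 : a + 1 = (n:ℝ) / 2 := by rw [hadef]; ring
  have hrhseq : a ^ a / (a + 1) ^ (a + 1)
      = 2 * (((n : ℝ) - 2) ^ (((n : ℝ) - 2) / 2) / (n : ℝ) ^ ((n : ℝ) / 2)) := by
    rw [ha1, hadef, Real.div_rpow (by linarith) (by norm_num : (0:ℝ) ≤ 2),
      Real.div_rpow (by linarith) (by norm_num : (0:ℝ) ≤ 2)]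
    have hD : (2:ℝ) ^ ((n:ℝ) / 2) = 2 ^ (((n:ℝ) - 2) / 2) * 2 := by
      rw [show (n:ℝ)/2 = ((n:ℝ)-2)/2 + 1 by ring,
        Real.rpow_add_one (by norm_num : (2:ℝ) ≠ 0)]
    rw [hD]
    have hB : (0:ℝ) < (2:ℝ) ^ (((n:ℝ) - 2) / 2) := Real.rpow_pos_of_pos (by norm_num) _
    have hC : (0:ℝ) < (n:ℝ) ^ ((n:ℝ) / 2) := Real.rpow_pos_of_pos (by linarith) _
    field_simp
  rw [hrhseq] at h
  have h' : -(2 * m) ≤ 2 * (((n : ℝ) - 2) ^ (((n : ℝ) - 2) / 2) / (n : ℝ) ^ ((n : ℝ) / 2)) := h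
  rw [← hadef] at h'
  rw [ge_iff_le, neg_div, neg_le]
  linarith
end

section
/- With λ as above (λ' = √(κ + λ² − 2mλ^{2−n}), λ'' = λ + (n−2)mλ^{1−n}, λ(0) = ρ₀ the largest root of ρ² + κ − 2mρ^{2−n}), one has λ''(r) ≥ 0 for all r ∈ [0,∞). -/
/-!
Writing `λ'' = (λⁿ + (n-2)m) / λⁿ⁻¹` and using `λ ≥ ρ₀`, it suffices that `ρ₀ⁿ + (n-2)m ≥ 0`.
This is clear for `m ≥ 0`. If `m < 0`, then `κ = -1` and `ρ₀` solves `ρⁿ - ρⁿ⁻² = 2m`.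
The left side attains its minimum `2 m_c` at `s = √((n-2)/n)` and vanishes at `1`, so `m ≥ m_c`
yields a root in `[s, 1]`; as `ρ₀` is the largest root, `n ρ₀² ≥ n - 2`, and then
`2 (ρ₀ⁿ + (n-2)m) = ρ₀ⁿ⁻² (n ρ₀² - (n-2)) ≥ 0`.
-/

open Real

theorem kottler_root_iff {n : ℕ} (hn : 2 ≤ n) {κ m ρ : ℝ} (hρ : 0 < ρ) :
    ρ ^ 2 + κ - 2 * m / ρ ^ (n - 2) = 0 ↔ ρ ^ n + κ * ρ ^ (n - 2) = 2 * m := by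
  have hpow : ρ ^ n = ρ ^ 2 * ρ ^ (n - 2) := by rw [← pow_add]; congr 1; omega
  have hpos : 0 < ρ ^ (n - 2) := pow_pos hρ _
  rw [hpow, sub_eq_zero, eq_div_iff hpos.ne']
  constructor <;> intro h <;> linarith

theorem two_mul_kottler_critical_mass {n : ℕ} (hn : 2 < n) :
    2 * (-((n : ℝ) - 2) ^ (((n : ℝ) - 2) / 2) / (n : ℝ) ^ ((n : ℝ) / 2)) =
      √(((n : ℝ) - 2) / n) ^ n - √(((n : ℝ) - 2) / n) ^ (n - 2) := by
  have hn' : (2 : ℝ) < n := by exact_mod_cast hn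
  have hnpos : (0 : ℝ) < n := by linarith
  set a : ℝ := ((n : ℝ) - 2) / n
  have ha : 0 < a := div_pos (by linarith) hnpos
  have hsub : ((n - 2 : ℕ) : ℝ) = (n : ℝ) - 2 := by push_cast [hn.le]; ring
  have hpow_sub : √a ^ (n - 2) = a ^ (((n : ℝ) - 2) / 2) := by
    rw [sqrt_eq_rpow, ← rpow_natCast, ← rpow_mul ha.le, hsub]; ring_nf
  have hpow : √a ^ n = √a ^ (n - 2) * a :=
    calc √a ^ n = √a ^ (n - 2) * √a ^ 2 := by rw [← pow_add, Nat.sub_add_cancel hn.le]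
      _ = √a ^ (n - 2) * a := by rw [sq_sqrt ha.le]
  have hcrit : ((n : ℝ) - 2) ^ (((n : ℝ) - 2) / 2) / (n : ℝ) ^ ((n : ℝ) / 2)
      = a ^ (((n : ℝ) - 2) / 2) / n := by
    rw [div_rpow (by linarith) hnpos.le, div_div, ← rpow_add_one hnpos.ne']
    ring_nf
  rw [hpow, hpow_sub, neg_div, hcrit]
  simp only [a]
  field_simp
  ring

theorem exists_root_pow_sub_pow_two (n : ℕ) {s c : ℝ} (hs : s ≤ 1)
    (hsc : s ^ n - s ^ (n - 2) ≤ c) (hc : c ≤ 0) :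
    ∃ ρ ∈ Set.Icc s 1, ρ ^ n - ρ ^ (n - 2) = c := by
  have hcont : ContinuousOn (fun ρ : ℝ => ρ ^ n - ρ ^ (n - 2)) (Set.Icc s 1) := by fun_prop
  exact intermediate_value_Icc hs hcont ⟨hsc, by simpa using hc⟩

theorem pow_add_mul_nonneg_of_pow_sub_pow_two_eq {n : ℕ} (hn : 2 ≤ n) {m ρ : ℝ} (hρ : 0 ≤ ρ)
    (hroot : ρ ^ n - ρ ^ (n - 2) = 2 * m) (hρs : √(((n : ℝ) - 2) / n) ≤ ρ) :
    0 ≤ ρ ^ n + ((n : ℝ) - 2) * m := by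
  have hn' : (2 : ℝ) ≤ n := by exact_mod_cast hn
  have hsq : (n : ℝ) - 2 ≤ n * ρ ^ 2 := by
    have h := pow_le_pow_left₀ (sqrt_nonneg _) hρs 2
    rw [sq_sqrt (div_nonneg (by linarith) (by linarith)), div_le_iff₀' (by linarith)] at h
    exact h
  have hpow : ρ ^ n = ρ ^ (n - 2) * ρ ^ 2 := by rw [← pow_add, Nat.sub_add_cancel hn]
  have hfactor : 2 * (ρ ^ n + ((n : ℝ) - 2) * m) = ρ ^ (n - 2) * (n * ρ ^ 2 - ((n : ℝ) - 2)) := by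
    linear_combination (2 - (n : ℝ)) * hroot + (n : ℝ) * hpow
  nlinarith [mul_nonneg (pow_nonneg hρ (n - 2)) (sub_nonneg.2 hsq)]

theorem kottler_pow_add_mul_nonneg {n : ℕ} (hn : 2 < n) {κ m ρ₀ : ℝ}
    (hκ : κ = -1 ∨ κ = 0 ∨ κ = 1)
    (hm : (0 ≤ κ → 0 < m) ∧
      (κ = -1 → m ≥ -((n : ℝ) - 2) ^ (((n : ℝ) - 2) / 2) / (n : ℝ) ^ ((n : ℝ) / 2)))
    (hρ₀ : 0 < ρ₀) (hroot : ρ₀ ^ 2 + κ - 2 * m / ρ₀ ^ (n - 2) = 0)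
    (hlargest : ∀ ρ : ℝ, 0 < ρ → ρ ^ 2 + κ - 2 * m / ρ ^ (n - 2) = 0 → ρ ≤ ρ₀) :
    0 ≤ ρ₀ ^ n + ((n : ℝ) - 2) * m := by
  have hn' : (2 : ℝ) < n := by exact_mod_cast hn
  rcases le_or_gt 0 m with hm0 | hm0
  · nlinarith [pow_nonneg hρ₀.le n]
  have hκ' : κ = -1 := by
    rcases hκ with h | h | h
    · exact h
    all_goals linarith [hm.1 (by norm_num [h])]
  subst hκ'
  have hs : 0 < √(((n : ℝ) - 2) / n) := sqrt_pos.2 (div_pos (by linarith) (by linarith))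
  have hs1 : √(((n : ℝ) - 2) / n) ≤ 1 := sqrt_le_one.2 ((div_le_one (by linarith)).2 (by linarith))
  obtain ⟨ρ, hρ, hρroot⟩ := exists_root_pow_sub_pow_two n hs1
    (by rw [← two_mul_kottler_critical_mass hn]; linarith [hm.2 rfl]) (by linarith : 2 * m ≤ 0)
  have hρpos : 0 < ρ := hs.trans_le hρ.1
  have hρle : ρ ≤ ρ₀ := hlargest ρ hρpos ((kottler_root_iff hn.le hρpos).2 (by linarith))
  have hroot' := (kottler_root_iff hn.le hρ₀).1 hroot
  exact pow_add_mul_nonneg_of_pow_sub_pow_two_eq hn.le hρ₀.le (by linarith) (hρ.1.trans hρle)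

theorem add_div_pow_pred_nonneg {n : ℕ} (hn : 1 ≤ n) {c ρ₀ x : ℝ} (hρ₀ : 0 < ρ₀)
    (hc : 0 ≤ ρ₀ ^ n + c) (hx : ρ₀ ≤ x) : 0 ≤ x + c / x ^ (n - 1) := by
  have hxpos : 0 < x ^ (n - 1) := pow_pos (hρ₀.trans_le hx) _
  have hpow : x ^ n = x * x ^ (n - 1) := by rw [← pow_succ', Nat.sub_add_cancel hn]
  have hquot : x + c / x ^ (n - 1) = (x ^ n + c) / x ^ (n - 1) := by
    rw [hpow]; field_simp
  rw [hquot]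
  exact div_nonneg (by linarith [pow_le_pow_left₀ hρ₀.le hx n]) hxpos.le

theorem stmt_7_general (n : ℕ) (hn : 3 ≤ n) (κ m ρ₀ : ℝ)
    (hκ : κ = -1 ∨ κ = 0 ∨ κ = 1)
    (hm : (0 ≤ κ → 0 < m) ∧
      (κ = -1 → m ≥ -((n : ℝ) - 2) ^ (((n : ℝ) - 2) / 2) / (n : ℝ) ^ ((n : ℝ) / 2)))
    (hρ₀ : 0 < ρ₀)
    (hroot : ρ₀ ^ 2 + κ - 2 * m / ρ₀ ^ (n - 2) = 0)
    (hlargest : ∀ ρ : ℝ, 0 < ρ → ρ ^ 2 + κ - 2 * m / ρ ^ (n - 2) = 0 → ρ ≤ ρ₀)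
    (lam : ℝ → ℝ)
    (hge : ∀ r ≥ (0 : ℝ), lam r ≥ ρ₀)
    (hd2 : ∀ r ≥ (0 : ℝ),
      deriv (deriv lam) r = lam r + (n - 2 : ℝ) * m / lam r ^ (n - 1)) :
    ∀ r ≥ (0 : ℝ), deriv (deriv lam) r ≥ 0 := by
  intro r hr
  rw [hd2 r hr]
  exact add_div_pow_pred_nonneg (by omega) hρ₀
    (kottler_pow_add_mul_nonneg hn hκ hm hρ₀ hroot hlargest) (hge r hr)

/-- Convexity of the warping function of the Kottler space: with
`λ' = √(κ + λ² − 2mλ^{2−n})`, `λ'' = λ + (n−2)mλ^{1−n}` and `λ(0) = ρ₀` the largest root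
of `ρ² + κ − 2mρ^{2−n}`, one has `λ''(r) ≥ 0` for all `r ≥ 0`, given the mass
constraints (`m > 0` when `κ ≥ 0`, `m ≥ m_c` when `κ = −1`). -/
theorem stmt_7 (n : ℕ) (hn : 3 ≤ n) (κ m ρ₀ : ℝ)
    (hκ : κ = -1 ∨ κ = 0 ∨ κ = 1)
    (hm : (0 ≤ κ → 0 < m) ∧
      (κ = -1 → m ≥ -((n : ℝ) - 2) ^ (((n : ℝ) - 2) / 2) / (n : ℝ) ^ ((n : ℝ) / 2)))
    (hρ₀ : 0 < ρ₀)
    (hroot : ρ₀ ^ 2 + κ - 2 * m / ρ₀ ^ (n - 2) = 0)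
    (hlargest : ∀ ρ : ℝ, 0 < ρ → ρ ^ 2 + κ - 2 * m / ρ ^ (n - 2) = 0 → ρ ≤ ρ₀)
    (lam : ℝ → ℝ) (hlam0 : lam 0 = ρ₀)
    (hge : ∀ r ≥ (0 : ℝ), lam r ≥ ρ₀)
    (hd1 : ∀ r ≥ (0 : ℝ),
      deriv lam r = Real.sqrt (κ + lam r ^ 2 - 2 * m / lam r ^ (n - 2)))
    (hd2 : ∀ r ≥ (0 : ℝ),
      deriv (deriv lam) r = lam r + (n - 2 : ℝ) * m / lam r ^ (n - 1)) :
    ∀ r ≥ (0 : ℝ), deriv (deriv lam) r ≥ 0 :=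
  stmt_7_general n hn κ m ρ₀ hκ hm hρ₀ hroot hlargest lam hge hd2
end

section
/- Let V(ρ) = √(ρ² + κ − 2mρ^{2−n}) on (ρ₀,∞) and W(ρ) = √(ρ² + κ) on the same interval with ρ₀ ≥ 1, m > 0. Then for each ρ > ρ₀, 1/V(ρ)² − 1/W(ρ)² > 0, so the graph function f(ρ) = ∫_{ρ₀}^{ρ} (1/W(s))·√(1/V(s)² − 1/W(s)²) ds is well-defined and strictly increasing; moreover f'(ρ) = O((ρ−ρ₀)^{−1/2}) as ρ → ρ₀⁺, so f extends continuously to ρ₀. -/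
/-- Realizing the Kottler metric as a graph over the locally hyperbolic space: with
`V² = ρ² + κ − 2mρ^{2−n}` and `W² = ρ² + κ` on `(ρ₀,∞)`, `m > 0`, one has
`1/V² − 1/W² > 0` for `ρ > ρ₀`; the graph function
`f(ρ) = ∫_{ρ₀}^ρ (1/W)·√(1/V² − 1/W²)` is strictly increasing; the integrand is
`O((ρ−ρ₀)^{−1/2})` as `ρ → ρ₀⁺`; and `f` extends continuously to `ρ₀`. -/
theorem stmt_16 (n : ℕ) (hn : 3 ≤ n) (κ m ρ₀ : ℝ) (hρ₀ : 1 ≤ ρ₀) (hm : 0 < m)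
    (hroot : ρ₀ ^ 2 + κ - 2 * m / ρ₀ ^ (n - 2) = 0)
    (hposV : ∀ ρ > ρ₀, 0 < ρ ^ 2 + κ - 2 * m / ρ ^ (n - 2))
    (hposW : ∀ ρ ≥ ρ₀, 0 < ρ ^ 2 + κ)
    (g f : ℝ → ℝ)
    (hg : ∀ ρ, g ρ = (1 / Real.sqrt (ρ ^ 2 + κ)) *
      Real.sqrt (1 / (ρ ^ 2 + κ - 2 * m / ρ ^ (n - 2)) - 1 / (ρ ^ 2 + κ)))
    (hf : ∀ ρ ≥ ρ₀, f ρ = ∫ s in ρ₀..ρ, g s) :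
    (∀ ρ > ρ₀, 0 < 1 / (ρ ^ 2 + κ - 2 * m / ρ ^ (n - 2)) - 1 / (ρ ^ 2 + κ)) ∧
    StrictMonoOn f (Set.Ici ρ₀) ∧
    (∃ C : ℝ, 0 < C ∧ ∀ ρ ∈ Set.Ioc ρ₀ (ρ₀ + 1), g ρ ≤ C * (ρ - ρ₀) ^ (-(1 : ℝ) / 2)) ∧
    ContinuousOn f (Set.Ici ρ₀) := by
  have hρ₀pos : (0:ℝ) < ρ₀ := lt_of_lt_of_le one_pos hρ₀
  have hA : 0 < ρ₀ ^ 2 + κ := hposW ρ₀ le_rfl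
  -- claim 1
  have claim1 : ∀ ρ > ρ₀, 0 < 1 / (ρ ^ 2 + κ - 2 * m / ρ ^ (n - 2)) - 1 / (ρ ^ 2 + κ) := by
    intro ρ hρ
    have hV := hposV ρ hρ
    have hρpos : (0:ℝ) < ρ := lt_trans hρ₀pos hρ
    have hpow : (0:ℝ) < ρ ^ (n - 2) := pow_pos hρpos _
    have hlt : ρ ^ 2 + κ - 2 * m / ρ ^ (n - 2) < ρ ^ 2 + κ := by
      have : 0 < 2 * m / ρ ^ (n - 2) := by positivity
      linarith
    have := one_div_lt_one_div_of_lt hV hlt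
    linarith
  -- lower bound on V² : V²(ρ) ≥ 2(ρ - ρ₀) for ρ ≥ ρ₀
  have hVlb : ∀ ρ ≥ ρ₀, 2 * (ρ - ρ₀) ≤ ρ ^ 2 + κ - 2 * m / ρ ^ (n - 2) := by
    intro ρ hρ
    have hρpos : (0:ℝ) < ρ := lt_of_lt_of_le hρ₀pos hρ
    have hpow0 : (0:ℝ) < ρ₀ ^ (n - 2) := pow_pos hρ₀pos _
    have hpowle : ρ₀ ^ (n - 2) ≤ ρ ^ (n - 2) :=
      pow_le_pow_left₀ (le_of_lt hρ₀pos) hρ _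
    have hdivle : 2 * m / ρ ^ (n - 2) ≤ 2 * m / ρ₀ ^ (n - 2) :=
      div_le_div_of_nonneg_left (by positivity) hpow0 hpowle
    have hsq : ρ₀ ^ 2 + 2 * (ρ - ρ₀) ≤ ρ ^ 2 := by nlinarith
    nlinarith
  -- nonnegativity of g
  have hgnn : ∀ ρ, 0 ≤ g ρ := by
    intro ρ; rw [hg ρ]; positivity
  -- positivity of g on (ρ₀, ∞)
  have hgpos : ∀ ρ > ρ₀, 0 < g ρ := by
    intro ρ hρ
    rw [hg ρ]
    have h1 : 0 < Real.sqrt (ρ ^ 2 + κ) :=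
      Real.sqrt_pos.2 (hposW ρ (le_of_lt hρ))
    have h2 : 0 < Real.sqrt (1 / (ρ ^ 2 + κ - 2 * m / ρ ^ (n - 2)) - 1 / (ρ ^ 2 + κ)) :=
      Real.sqrt_pos.2 (claim1 ρ hρ)
    positivity
  -- the O((ρ-ρ₀)^{-1/2}) bound
  set C : ℝ := 1 / Real.sqrt (ρ₀ ^ 2 + κ) with hC
  have hCpos : 0 < C := by
    have : 0 < Real.sqrt (ρ₀ ^ 2 + κ) := Real.sqrt_pos.2 hA
    positivity
  have hbound : ∀ ρ ∈ Set.Ioc ρ₀ (ρ₀ + 1), g ρ ≤ C * (ρ - ρ₀) ^ (-(1 : ℝ) / 2) := by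
    intro ρ hρ
    obtain ⟨h1, _⟩ := hρ
    have hd : 0 < ρ - ρ₀ := sub_pos.2 h1
    have hW : 0 < ρ ^ 2 + κ := hposW ρ (le_of_lt h1)
    have hV : 0 < ρ ^ 2 + κ - 2 * m / ρ ^ (n - 2) := hposV ρ h1
    rw [hg ρ]
    have hfac1 : 1 / Real.sqrt (ρ ^ 2 + κ) ≤ C := by
      rw [hC]
      have hmono : Real.sqrt (ρ₀ ^ 2 + κ) ≤ Real.sqrt (ρ ^ 2 + κ) := by
        apply Real.sqrt_le_sqrt
        nlinarith
      exact one_div_le_one_div_of_le (Real.sqrt_pos.2 hA) hmono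
    have hfac2 : Real.sqrt (1 / (ρ ^ 2 + κ - 2 * m / ρ ^ (n - 2)) - 1 / (ρ ^ 2 + κ)) ≤
        (ρ - ρ₀) ^ (-(1 : ℝ) / 2) := by
      have hle : 1 / (ρ ^ 2 + κ - 2 * m / ρ ^ (n - 2)) - 1 / (ρ ^ 2 + κ) ≤ 1 / (ρ - ρ₀) := by
        have h2 : 1 / (ρ ^ 2 + κ - 2 * m / ρ ^ (n - 2)) ≤ 1 / (2 * (ρ - ρ₀)) :=
          one_div_le_one_div_of_le (by linarith) (hVlb ρ (le_of_lt h1))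
        have h3 : (0:ℝ) ≤ 1 / (ρ ^ 2 + κ) := by positivity
        have h4 : 1 / (2 * (ρ - ρ₀)) ≤ 1 / (ρ - ρ₀) := by
          apply one_div_le_one_div_of_le hd; linarith
        linarith
      calc Real.sqrt (1 / (ρ ^ 2 + κ - 2 * m / ρ ^ (n - 2)) - 1 / (ρ ^ 2 + κ))
          ≤ Real.sqrt (1 / (ρ - ρ₀)) := Real.sqrt_le_sqrt hle
        _ = (ρ - ρ₀) ^ (-(1 : ℝ) / 2) := by
            rw [show (-(1:ℝ)/2) = -(1/2 : ℝ) by ring, Real.rpow_neg (le_of_lt hd),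
              ← Real.sqrt_eq_rpow, one_div, Real.sqrt_inv]
    have := mul_le_mul hfac1 hfac2 (Real.sqrt_nonneg _) (le_of_lt hCpos)
    exact this
  -- measurability of g
  have hgeq : g = fun ρ => (1 / Real.sqrt (ρ ^ 2 + κ)) *
      Real.sqrt (1 / (ρ ^ 2 + κ - 2 * m / ρ ^ (n - 2)) - 1 / (ρ ^ 2 + κ)) := funext hg
  have hmeas : Measurable g := by
    rw [hgeq]
    have m1 : Measurable fun ρ : ℝ => ρ ^ 2 + κ := by fun_prop
    have m2 : Measurable fun ρ : ℝ => ρ ^ 2 + κ - 2 * m / ρ ^ (n - 2) :=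
      m1.sub (measurable_const.div (by fun_prop))
    exact (measurable_const.div (Real.continuous_sqrt.measurable.comp m1)).mul
      (Real.continuous_sqrt.measurable.comp
        ((measurable_const.div m2).sub (measurable_const.div m1)))
  -- integrability of g on [ρ₀, ρ₀+1]
  have hInt1 : IntervalIntegrable g MeasureTheory.volume ρ₀ (ρ₀ + 1) := by
    have hmaj : IntervalIntegrable (fun x => C * (x - ρ₀) ^ (-(1:ℝ)/2))
        MeasureTheory.volume ρ₀ (ρ₀ + 1) := by
      have h0 : IntervalIntegrable (fun x : ℝ => x ^ (-(1:ℝ)/2)) MeasureTheory.volume 0 1 :=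
        intervalIntegral.intervalIntegrable_rpow' (by norm_num)
      have h1 := (h0.comp_sub_right ρ₀).const_mul C
      simpa [zero_add, add_comm] using h1
    rw [intervalIntegrable_iff_integrableOn_Ioc_of_le (by linarith)] at hmaj ⊢
    apply hmaj.mono' (hmeas.aestronglyMeasurable.restrict)
    rw [MeasureTheory.ae_restrict_iff' measurableSet_Ioc]
    filter_upwards with x hx
    rw [Real.norm_eq_abs, abs_of_nonneg (hgnn x)]
    exact hbound x hx
  -- continuity of g on (ρ₀, ∞)
  have hcontg : ContinuousOn g (Set.Ioi ρ₀) := by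
    rw [hgeq]
    intro x hx
    have hxpos : (0:ℝ) < x := lt_trans hρ₀pos hx
    have hW : 0 < x ^ 2 + κ := hposW x (le_of_lt hx)
    have hV : 0 < x ^ 2 + κ - 2 * m / x ^ (n - 2) := hposV x hx
    apply ContinuousAt.continuousWithinAt
    have c1 : ContinuousAt (fun ρ : ℝ => ρ ^ 2 + κ) x := by fun_prop
    have c2 : ContinuousAt (fun ρ : ℝ => ρ ^ 2 + κ - 2 * m / ρ ^ (n - 2)) x := by
      apply c1.sub
      exact continuousAt_const.div (by fun_prop) (by positivity)
    have c3 : ContinuousAt (fun ρ : ℝ => Real.sqrt (ρ ^ 2 + κ)) x :=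
      Real.continuous_sqrt.continuousAt.comp c1
    apply ContinuousAt.mul
    · exact continuousAt_const.div c3 (ne_of_gt (Real.sqrt_pos.2 hW))
    · apply Real.continuous_sqrt.continuousAt.comp
      exact (continuousAt_const.div c2 (ne_of_gt hV)).sub
        (continuousAt_const.div c1 (ne_of_gt hW))
  -- integrability of g on [ρ₀, ρ] for any ρ ≥ ρ₀
  have hInt : ∀ ρ ≥ ρ₀, IntervalIntegrable g MeasureTheory.volume ρ₀ ρ := by
    intro ρ hρ
    rcases le_or_gt ρ (ρ₀ + 1) with h | h
    · apply hInt1.mono_set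
      rw [Set.uIcc_of_le hρ, Set.uIcc_of_le (by linarith)]
      exact Set.Icc_subset_Icc le_rfl h
    · apply hInt1.trans
      apply ContinuousOn.intervalIntegrable
      apply hcontg.mono
      rw [Set.uIcc_of_le (le_of_lt h)]
      intro s hs
      exact lt_of_lt_of_le (by linarith) hs.1
  refine ⟨claim1, ?_, ⟨C, hCpos, hbound⟩, ?_⟩
  · -- strict monotonicity
    intro a ha b hb hab
    have hIa := hInt a ha
    have hIb := hInt b (Set.mem_Ici.1 hb)
    have hIab : IntervalIntegrable g MeasureTheory.volume a b := by
      apply hIb.mono_set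
      rw [Set.uIcc_of_le (le_of_lt hab), Set.uIcc_of_le (Set.mem_Ici.1 hb)]
      exact Set.Icc_subset_Icc ha le_rfl
    have hsum : (∫ s in ρ₀..a, g s) + ∫ s in a..b, g s = ∫ s in ρ₀..b, g s :=
      intervalIntegral.integral_add_adjacent_intervals hIa hIab
    have hpos : 0 < ∫ s in a..b, g s := by
      apply intervalIntegral.intervalIntegral_pos_of_pos_on hIab _ hab
      intro x hx
      exact hgpos x (lt_of_le_of_lt ha hx.1)
    rw [hf a ha, hf b (Set.mem_Ici.1 hb)]
    linarith
  · -- continuity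
    intro x hx
    have hx' : ρ₀ ≤ x := hx
    have hle : ρ₀ ≤ x + 1 := by linarith
    have hFcont : ContinuousOn (fun b => ∫ s in ρ₀..b, g s) (Set.uIcc ρ₀ (x + 1)) :=
      intervalIntegral.continuousOn_primitive_interval' (hInt (x + 1) hle) Set.left_mem_uIcc
    rw [Set.uIcc_of_le hle] at hFcont
    have hfc : ContinuousOn f (Set.Icc ρ₀ (x + 1)) := by
      apply hFcont.congr
      intro y hy
      exact hf y hy.1
    have hxmem : x ∈ Set.Icc ρ₀ (x + 1) := ⟨hx', by linarith⟩
    have hnhds : Set.Icc ρ₀ (x + 1) ∈ nhdsWithin x (Set.Ici ρ₀) := by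
      have : Set.Icc ρ₀ (x + 1) = Set.Ici ρ₀ ∩ Set.Iic (x + 1) := (Set.Ici_inter_Iic).symm
      rw [this]
      exact Filter.inter_mem self_mem_nhdsWithin
        (mem_nhdsWithin_of_mem_nhds (Iic_mem_nhds (by linarith)))
    exact (hfc x hxmem).mono_of_mem_nhdsWithin hnhds
end
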